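/- The projective plane curve over the complex numbers defined by F(X,Y,Z) = X^5·Y + Y^5·Z + Z^5·X = 0 is smooth, i.e., the only common zero in ℂ³ of F and its three partial derivatives is the origin. -/
import Mathlib


open MvPolynomial

/-- The sextic `F(X,Y,Z) = X^5·Y + Y^5·Z + Z^5·X` as a polynomial in three variables. -/
noncomputable def F8 : MvPolynomial (Fin 3) ℂ :=
  X 0 ^ 5 * X 1 + X 1 ^ 5 * X 2 + X 2 ^ 5 * X 0

theorem stmt_8 (v : Fin 3 → ℂ)
    (h0 : eval v F8 = 0)
    (hd : ∀ i : Fin 3, eval v (pderiv i F8) = 0) :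
    v = 0 := by
  set x := v 0 with hx
  set y := v 1 with hy
  set z := v 2 with hz
  have e0 : 5 * x ^ 4 * y + z ^ 5 = 0 := by
    have := hd 0
    simp [F8, pderiv_X] at this
    linear_combination this
  have e1 : x ^ 5 + 5 * y ^ 4 * z = 0 := by
    have := hd 1
    simp [F8, pderiv_X] at this
    linear_combination this
  have e2 : y ^ 5 + 5 * z ^ 4 * x = 0 := by
    have := hd 2
    simp [F8, pderiv_X] at this
    linear_combination this
  have key : (x * y * z) ^ 5 = 0 := by
    have h126 : (126 : ℂ) * (x * y * z) ^ 5 = 0 := by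
      linear_combination ((x ^ 5 + 5 * y ^ 4 * z) * (y ^ 5 + 5 * z ^ 4 * x)
        - 5 * x ^ 6 * z ^ 4) * e0 - 5 * x ^ 4 * y ^ 6 * e1 - 5 * y ^ 4 * z ^ 6 * e2
    linear_combination h126 / 126
  have hxyz : x * y * z = 0 := pow_eq_zero_iff (by norm_num) |>.mp key
  have hall : x = 0 ∧ y = 0 ∧ z = 0 := by
    rcases mul_eq_zero.mp hxyz with h | hz0
    · rcases mul_eq_zero.mp h with hx0 | hy0
      · have hz0 : z = 0 := by
          have : z ^ 5 = 0 := by linear_combination e0 - 5 * x ^ 3 * y * hx0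
          exact pow_eq_zero_iff (by norm_num) |>.mp this
        have hy0 : y = 0 := by
          have : y ^ 5 = 0 := by linear_combination e2 - 5 * z ^ 4 * hx0
          exact pow_eq_zero_iff (by norm_num) |>.mp this
        exact ⟨hx0, hy0, hz0⟩
      · have hx0 : x = 0 := by
          have : x ^ 5 = 0 := by linear_combination e1 - 5 * y ^ 3 * z * hy0
          exact pow_eq_zero_iff (by norm_num) |>.mp this
        have hz0 : z = 0 := by
          have : z ^ 5 = 0 := by linear_combination e0 - 5 * x ^ 4 * hy0
          exact pow_eq_zero_iff (by norm_num) |>.mp this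
        exact ⟨hx0, hy0, hz0⟩
    · have hy0 : y = 0 := by
        have : y ^ 5 = 0 := by linear_combination e2 - 5 * z ^ 3 * x * hz0
        exact pow_eq_zero_iff (by norm_num) |>.mp this
      have hx0 : x = 0 := by
        have : x ^ 5 = 0 := by linear_combination e1 - 5 * y ^ 4 * hz0
        exact pow_eq_zero_iff (by norm_num) |>.mp this
      exact ⟨hx0, hy0, hz0⟩
  funext i
  fin_cases i
  · exact hall.1
  · exact hall.2.1
  · exact hall.2.2
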